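/- Let b = r_1^{t_1} ⋯ r_ℓ^{t_ℓ} with r_1 < ⋯ < r_ℓ distinct primes, and let x be an integer coprime with b. If for each i the multiplicative order of x modulo r_i^{t_i} equals r_i^{h_i} for some 0 ≤ h_i ≤ t_i - 1, then b divides Ψ_b(x). -/

import Mathlib

/-!
Write `Ψ_n(x) = ∑_{i<n} x^i`. The identity `Ψ_{mn}(x) = Ψ_m(x) Ψ_n(x^m)` together with
`p ∣ Ψ_p(y)` whenever `p ∣ y - 1` shows, by induction on the prime factorisation of `b`, that
`b ∣ Ψ_b(x)` as soon as every prime factor of `b` divides `x - 1`. For the primes `r` of the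
theorem this holds because `x^(r^h) ≡ 1 (mod r)` while `x^(r^h) ≡ x (mod r)` by Fermat.
-/

open Finset

theorem geom_sum_range_mul {R : Type*} [Semiring R] (x : R) (m n : ℕ) :
    ∑ i ∈ range (m * n), x ^ i = (∑ i ∈ range m, x ^ i) * ∑ j ∈ range n, (x ^ m) ^ j := by
  induction n with
  | zero => simp
  | succ n ih =>
    rw [Nat.mul_succ, sum_range_add, ih, sum_range_succ, mul_add]
    congr 1
    rw [sum_mul]
    refine sum_congr rfl fun i _ => ?_
    rw [pow_add, (Commute.pow_pow_self x _ _).eq, pow_mul]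

theorem dvd_geom_sum_of_forall_prime_dvd_sub_one {R : Type*} [CommRing R] (b : ℕ) (x : R)
    (h : ∀ p : ℕ, p.Prime → p ∣ b → (p : R) ∣ x - 1) :
    (b : R) ∣ ∑ i ∈ range b, x ^ i := by
  induction b using Nat.recOnMul generalizing x with
  | zero => simp
  | one => simp
  | prime p hp =>
    simpa using dvd_geom_sum₂_self (y := (1 : R)) (h p hp dvd_rfl)
  | mul a c iha ihc =>
    rw [geom_sum_range_mul, Nat.cast_mul]
    refine mul_dvd_mul (iha x fun p hp hpa => h p hp (hpa.mul_right c)) (ihc _ fun p hp hpc => ?_)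
    exact (h p hp (hpc.mul_left a)).trans (by simpa using sub_dvd_pow_sub_pow x 1 a)

theorem prime_dvd_sub_one_of_pow_prime_pow_eq_one {p T h : ℕ} (hp : p.Prime) (hT : T ≠ 0)
    {x : ℤ} (hx : (x : ZMod (p ^ T)) ^ p ^ h = 1) : (p : ℤ) ∣ x - 1 := by
  have := Fact.mk hp
  have hxp : (x : ZMod p) ^ p ^ h = 1 := by
    simpa only [map_pow, map_intCast, map_one] using
      congrArg (ZMod.castHom (dvd_pow_self p hT) (ZMod p)) hx
  rw [ZMod.pow_card_pow] at hxp
  rw [← ZMod.intCast_zmod_eq_zero_iff_dvd]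
  simp [hxp]

theorem general_dvd_psi_general (ℓ : ℕ) (r : Fin ℓ → ℕ) (t : Fin ℓ → ℕ)
    (hprime : ∀ i, (r i).Prime)
    (b : ℕ) (hb : b = ∏ i, r i ^ t i)
    (x : ℤ)
    (hord : ∀ i : Fin ℓ, ∃ h : ℕ, h ≤ t i - 1 ∧
      orderOf (x : ZMod (r i ^ t i)) = r i ^ h) :
    (b : ℤ) ∣ ∑ i ∈ Finset.range b, x ^ i := by
  refine dvd_geom_sum_of_forall_prime_dvd_sub_one b x fun p hp hpb => ?_
  obtain ⟨i, -, hpi⟩ := (Nat.prime_iff.mp hp).dvd_finsetProd_iff _ |>.mp (hb ▸ hpb)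
  have hti : t i ≠ 0 := fun hti => hp.not_dvd_one (by simpa [hti] using hpi)
  obtain rfl : p = r i := (Nat.prime_dvd_prime_iff_eq hp (hprime i)).mp (hp.dvd_of_dvd_pow hpi)
  obtain ⟨h, -, hordi⟩ := hord i
  exact prime_dvd_sub_one_of_pow_prime_pow_eq_one hp hti (hordi ▸ pow_orderOf_eq_one _)

/-- For `b = r_1^{t_1} ⋯ r_ℓ^{t_ℓ}` with distinct primes `r_1 < ⋯ < r_ℓ` and `gcd(x,b)=1`:
if for each `i` the order of `x` modulo `r_i^{t_i}` is `r_i^{h_i}` with `0 ≤ h_i ≤ t_i - 1`,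
then `b ∣ Ψ_b(x)`. -/
theorem general_dvd_psi (ℓ : ℕ) (r : Fin ℓ → ℕ) (t : Fin ℓ → ℕ)
    (hprime : ∀ i, (r i).Prime) (hmono : StrictMono r) (ht : ∀ i, 0 < t i)
    (b : ℕ) (hb : b = ∏ i, r i ^ t i)
    (x : ℤ) (hx : IsCoprime x (b : ℤ))
    (hord : ∀ i : Fin ℓ, ∃ h : ℕ, h ≤ t i - 1 ∧
      orderOf (x : ZMod (r i ^ t i)) = r i ^ h) :
    (b : ℤ) ∣ ∑ i ∈ Finset.range b, x ^ i :=
  general_dvd_psi_general ℓ r t hprime b hb x hord
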